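/- For the monotone blow-up of P^2 with the circle action in direction (-1,-2), the maximum fixed point is p_{14} with normalized moment value 2 and the second maximal fixed component has value 1; the difference 1 is strictly less than the Gromov width 2. Moreover the action is not semifree, since the divisor D_3 has isotropy weight 2. Hence the semifreeness hypothesis in the Gromov width formula cannot be removed. -/

import Mathlib

/-- The four fixed points of the monotone toric blow-up of `ℙ²`, i.e. the
vertices `p₁₄ = (1,0)`, `p₁₂ = (3,0)`, `p₂₃ = (0,3)`, `p₃₄ = (0,1)` of its
moment polytope. -/
def blowupVertex : Fin 4 → ℤ × ℤ := ![(1, 0), (3, 0), (0, 3), (0, 1)]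

/-- The two primitive outward integer edge vectors at each vertex. -/
def blowupEdges : Fin 4 → (ℤ × ℤ) × (ℤ × ℤ) :=
  ![((1, 0), (-1, 1)), ((-1, 0), (-1, 1)), ((0, -1), (1, -1)), ((0, 1), (1, -1))]

/-- dot product on `ℤ × ℤ` -/
def dotProd (u v : ℤ × ℤ) : ℤ := u.1 * v.1 + u.2 * v.2

/-- The two isotropy weights at the `i`-th fixed point of the subcircle of
`T²` in direction `v`. -/
def circleWeights (v : ℤ × ℤ) (i : Fin 4) : ℤ × ℤ :=
  (dotProd (blowupEdges i).1 v, dotProd (blowupEdges i).2 v)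

/-- The normalized moment map value at the `i`-th fixed point: the negative
of the sum of the weights there. -/
def momentValue (v : ℤ × ℤ) (i : Fin 4) : ℤ :=
  -((circleWeights v i).1 + (circleWeights v i).2)

theorem circleWeights_eq (a b : ℤ) :
    circleWeights (a, b) = ![(a, b - a), (-a, b - a), (-b, a - b), (b, a - b)] := by
  funext i
  fin_cases i <;> simp [circleWeights, blowupEdges, dotProd] <;> ring

theorem momentValue_eq (a b : ℤ) :
    momentValue (a, b) = ![-b, 2 * a - b, 2 * b - a, -a] := by
  funext i
  fin_cases i <;> simp [momentValue, circleWeights_eq] <;> ring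

theorem circleWeights_neg_one_neg_two :
    circleWeights (-1, -2) = ![(-1, -1), (1, -1), (2, 1), (-2, 1)] := by
  rw [circleWeights_eq]; norm_num

theorem momentValue_neg_one_neg_two : momentValue (-1, -2) = ![2, 0, -3, 1] := by
  rw [momentValue_eq]; norm_num

/-- For the circle action in direction `(-1,-2)` on the monotone blow-up of
`ℙ²` (whose Gromov width is `2`): the maximum fixed point is `p₁₄` (index `0`)
with normalized moment value `2`, the second maximal fixed point is `p₃₄`
(index `3`) with value `1`; their difference `1` is strictly less than the
Gromov width `2`; and the action is not semifree, some fixed point having a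
weight (namely `2`, along the divisor `D₃`) outside `{-1,0,1}`.  Hence the
semifreeness hypothesis in the Gromov width formula cannot be removed. -/
theorem non_semifree_counterexample (wG : ℝ) (hwG : wG = 2) :
    momentValue (-1, -2) 0 = 2 ∧
    (∀ i : Fin 4, momentValue (-1, -2) i ≤ 2) ∧
    momentValue (-1, -2) 3 = 1 ∧
    (∀ i : Fin 4, i ≠ 0 → momentValue (-1, -2) i ≤ 1) ∧
    ((momentValue (-1, -2) 0 - momentValue (-1, -2) 3 : ℤ) : ℝ) < wG ∧
    (∃ i : Fin 4, (circleWeights (-1, -2) i).1 = 2 ∨ (circleWeights (-1, -2) i).2 = 2) := by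
  rw [momentValue_neg_one_neg_two, circleWeights_neg_one_neg_two, hwG]
  refine ⟨rfl, by decide, rfl, by decide, by simp, 2, Or.inl rfl⟩
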